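/- For every GKZ chamber C and every w ∈ ℤ^N, the translated quadrant skeleton lies in the GIT skeleton over the translated chamber: Λ_w ∩ (μ⁻¹(μ(w)+C) × ℝ^N) ⊆ Λ_C. -/

import Mathlib

open Pointwise
open scoped Classical

noncomputable section

/-- The conical Lagrangian `Λ₀ = SS(ℂ_{ℝ^N_{>0}})` over the origin. -/
def Lambda0 (N : ℕ) : Set ((Fin N → ℝ) × (Fin N → ℝ)) :=
  {p | ∀ i, (0 < p.1 i ∧ p.2 i = 0) ∨ (p.1 i = 0 ∧ p.2 i ≤ 0)}

/-- The translated conical Lagrangian `Λ_w` for `w ∈ ℤ^N`. -/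
def Lambdaw {N : ℕ} (w : Fin N → ℤ) : Set ((Fin N → ℝ) × (Fin N → ℝ)) :=
  {p | ((fun i => p.1 i - (w i : ℝ)), p.2) ∈ Lambda0 N}

/-- The window skeleton `Λ_W = ⋃ {Λ_w : w ∈ ℤ^N, μ(w) ∈ W}`. -/
def LambdaWin {N k : ℕ} (μ : (Fin N → ℝ) →ₗ[ℝ] (Fin k → ℝ)) (W : Set (Fin k → ℝ)) :
    Set ((Fin N → ℝ) × (Fin N → ℝ)) :=
  ⋃ (w : Fin N → ℤ) (_ : μ (fun i => (w i : ℝ)) ∈ W), Lambdaw w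

/-- The cone `τ_I` generated by the standard basis vectors `e_i`, `i ∈ I`. -/
def tauCone {N : ℕ} (I : Set (Fin N)) : Set (Fin N → ℝ) :=
  {x | ∀ i, 0 ≤ x i ∧ (i ∉ I → x i = 0)}

/-- The relative interior of `τ_I`. -/
def tauRelInt {N : ℕ} (I : Set (Fin N)) : Set (Fin N → ℝ) :=
  {x | ∀ i, (i ∈ I → 0 < x i) ∧ (i ∉ I → x i = 0)}

/-- The complement of the union of the boundaries `∂C_I`, `C_I = μ(τ_I)`. -/
def gkzGood {N k : ℕ} (μ : (Fin N → ℝ) →ₗ[ℝ] (Fin k → ℝ)) : Set (Fin k → ℝ) :=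
  {y | ∀ I : Set (Fin N), y ∉ frontier (μ '' tauCone I)}

/-- A GKZ chamber: a connected component of `ℝ^k ∖ ⋃_I ∂C_I`. -/
def IsGKZChamber {N k : ℕ} (μ : (Fin N → ℝ) →ₗ[ℝ] (Fin k → ℝ))
    (C : Set (Fin k → ℝ)) : Prop :=
  ∃ x ∈ gkzGood μ, C = connectedComponentIn (gkzGood μ) x

/-- `ℐ_C = {I : μ⁻¹(C) ∩ relint(τ_I) ≠ ∅}`. -/
def chamberIdx {N k : ℕ} (μ : (Fin N → ℝ) →ₗ[ℝ] (Fin k → ℝ))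
    (C : Set (Fin k → ℝ)) : Set (Set (Fin N)) :=
  {I | ((μ ⁻¹' C) ∩ tauRelInt I).Nonempty}

/-- The GIT (FLTZ) skeleton `Λ_C = ⋃_{I ∈ ℐ_C} (ℤ^N + ℝ^I) × (−σ_{I^c})`. -/
def LambdaGIT {N k : ℕ} (μ : (Fin N → ℝ) →ₗ[ℝ] (Fin k → ℝ))
    (C : Set (Fin k → ℝ)) : Set ((Fin N → ℝ) × (Fin N → ℝ)) :=
  ⋃ I ∈ chamberIdx μ C,
    {p | (∀ i, i ∉ I → ∃ n : ℤ, p.1 i = (n : ℝ)) ∧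
         (∀ i ∈ I, p.2 i = 0) ∧ (∀ i, i ∉ I → p.2 i ≤ 0)}

/-!
A point `(x, ξ)` of `Λ_w` is sorted by the support `I = {i | x i > w i}` of `x - w`: this vector lies
in `relint τ_I`, so `I ∈ ℐ_C` as soon as `μ(x - w) ∈ C`, while off `I` the coordinate `x i = w i`
is an integer and `ξ i ≤ 0`, and on `I` the covector vanishes.
-/

theorem mem_chamberIdx_of_mem_tauRelInt {N k : ℕ} {μ : (Fin N → ℝ) →ₗ[ℝ] (Fin k → ℝ)}
    {C : Set (Fin k → ℝ)} {I : Set (Fin N)} {y : Fin N → ℝ} (hy : y ∈ tauRelInt I)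
    (hμy : μ y ∈ C) : I ∈ chamberIdx μ C :=
  ⟨y, hμy, hy⟩

namespace Lambda0

variable {N : ℕ} {p : (Fin N → ℝ) × (Fin N → ℝ)}

theorem fst_mem_tauRelInt (hp : p ∈ Lambda0 N) : p.1 ∈ tauRelInt {i | 0 < p.1 i} := by
  refine fun i => ⟨id, fun hi => ?_⟩
  rcases hp i with ⟨hpos, -⟩ | ⟨hzero, -⟩
  · exact absurd hpos hi
  · exact hzero

theorem snd_eq_zero_of_pos (hp : p ∈ Lambda0 N) {i : Fin N} (hi : 0 < p.1 i) : p.2 i = 0 := by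
  rcases hp i with ⟨-, h⟩ | ⟨hzero, -⟩
  · exact h
  · exact absurd hzero hi.ne'

theorem fst_eq_zero_and_snd_nonpos (hp : p ∈ Lambda0 N) {i : Fin N} (hi : ¬0 < p.1 i) :
    p.1 i = 0 ∧ p.2 i ≤ 0 :=
  (hp i).resolve_left fun h => hi h.1

end Lambda0

theorem Lambdaw.mem_GIT_piece {N : ℕ} {w : Fin N → ℤ} {p : (Fin N → ℝ) × (Fin N → ℝ)}
    (hp : p ∈ Lambdaw w) :
    let I := {i | 0 < p.1 i - (w i : ℝ)}
    (∀ i, i ∉ I → ∃ n : ℤ, p.1 i = (n : ℝ)) ∧ (∀ i ∈ I, p.2 i = 0) ∧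
      (∀ i, i ∉ I → p.2 i ≤ 0) := by
  refine ⟨fun i hi => ⟨w i, ?_⟩, fun i hi => Lambda0.snd_eq_zero_of_pos hp hi,
    fun i hi => (Lambda0.fst_eq_zero_and_snd_nonpos hp hi).2⟩
  exact sub_eq_zero.1 (Lambda0.fst_eq_zero_and_snd_nonpos hp hi).1

theorem translated_quadrant_skeleton_subset_GIT_skeleton
    {N k : ℕ}
    (μ : (Fin N → ℝ) →ₗ[ℝ] (Fin k → ℝ))
    (C : Set (Fin k → ℝ))
    (w : Fin N → ℤ) :
    Lambdaw w ∩
        ((μ ⁻¹' {y | y - μ (fun i => (w i : ℝ)) ∈ C}) ×ˢ (Set.univ : Set (Fin N → ℝ)))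
      ⊆ LambdaGIT μ C := by
  rintro p ⟨hp, hμp, -⟩
  have hμ : μ (fun i => p.1 i - (w i : ℝ)) ∈ C := by
    rw [show (fun i => p.1 i - (w i : ℝ)) = p.1 - fun i => (w i : ℝ) from rfl, map_sub]
    exact hμp
  exact Set.mem_iUnion₂.2
    ⟨_, mem_chamberIdx_of_mem_tauRelInt (Lambda0.fst_mem_tauRelInt hp) hμ,
      Lambdaw.mem_GIT_piece hp⟩
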